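/- arXiv:1706.03147 — 6 statements merged into one kernel-verified Lean document; each statement's English description precedes it below -/
import Mathlib

section
/- Let A be nonsingular and Â = A - H E Hᵀ with H an n×m submatrix of the identity and E m×m. If Â is nonsingular, then S₂ = E Hᵀ A⁻¹ H - I_m is nonsingular. -/
open scoped Matrix

namespace Matrix

variable {ι κ α : Type*} [Fintype ι] [DecidableEq ι] [Fintype κ] [DecidableEq κ] [CommRing α]

theorem det_sub_mul_mul {A : Matrix ι ι α} (U : Matrix ι κ α) (C : Matrix κ κ α)
    (V : Matrix κ ι α) (hA : IsUnit A.det) :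
    (A - U * C * V).det = A.det * (1 - C * V * A⁻¹ * U).det := by
  rw [sub_eq_add_neg, ← Matrix.neg_mul, det_add_mul _ _ hA, Matrix.mul_neg,
    ← sub_eq_add_neg, ← Matrix.mul_assoc, det_one_sub_mul_comm]
  simp only [Matrix.mul_assoc]

theorem isUnit_det_mul_sub_one_of_isUnit_det_sub {A : Matrix ι ι α} {U : Matrix ι κ α}
    {C : Matrix κ κ α} {V : Matrix κ ι α} (hA : IsUnit A.det)
    (hsub : IsUnit (A - U * C * V).det) : IsUnit (C * V * A⁻¹ * U - 1).det := by
  rw [det_sub_mul_mul U C V hA] at hsub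
  rw [← neg_sub, det_neg]
  exact (isUnit_one.neg.pow _).mul (isUnit_of_mul_isUnit_right hsub)

end Matrix

theorem stmt_10_general {n m : ℕ} (A : Matrix (Fin n) (Fin n) ℝ) (hA : IsUnit A.det)
    (H : Matrix (Fin n) (Fin m) ℝ)
    (E : Matrix (Fin m) (Fin m) ℝ)
    (hAhat : IsUnit (A - H * E * Hᵀ).det) :
    IsUnit (E * Hᵀ * A⁻¹ * H - 1).det :=
  Matrix.isUnit_det_mul_sub_one_of_isUnit_det_sub hA hAhat

/-- If A and Â = A - H E Hᵀ are both nonsingular (H a submatrix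
of the identity), then S₂ = E Hᵀ A⁻¹ H - I is nonsingular. -/
theorem stmt_10 {n m : ℕ} (A : Matrix (Fin n) (Fin n) ℝ) (hA : IsUnit A.det)
    (H : Matrix (Fin n) (Fin m) ℝ) (hH : Hᵀ * H = 1)
    (E : Matrix (Fin m) (Fin m) ℝ)
    (hAhat : IsUnit (A - H * E * Hᵀ).det) :
    IsUnit (E * Hᵀ * A⁻¹ * H - 1).det :=
  stmt_10_general A hA H E hAhat
end

section
/- Suppose A is nonsingular, H an n×m submatrix of the identity, E m×m symmetric with Â = A - H E Hᵀ nonsingular, and b, b̂ ∈ ℝⁿ with b̂ - b ∈ range(H). If x̂₃ solves (E Hᵀ A⁻¹ H - I) x̂₃ = E Hᵀ A⁻¹ b - Hᵀ(b - b̂), then x̂ := A⁻¹ b - A⁻¹ H x̂₃ satisfies Â x̂ = b̂. -/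
open scoped Matrix

/-!
Multiplying the Schur complement system by `H` and substituting it into
`Â x̂ = b - H E Hᵀ A⁻¹ b + (H E Hᵀ A⁻¹ H - H) x̂₃` leaves `Â x̂ = b - H Hᵀ (b - b̂)`.
Since `Hᵀ H = 1`, the projection `H Hᵀ` fixes the range of `H`, which contains `b - b̂`.
-/

namespace Matrix

variable {R : Type*} {ι κ : Type*} [Fintype ι]

theorem transpose_one_submatrix_mul_self [Semiring R] [DecidableEq ι] [DecidableEq κ]
    {e : κ → ι} (he : Function.Injective e) :
    ((1 : Matrix ι ι R).submatrix id e)ᵀ * (1 : Matrix ι ι R).submatrix id e = 1 := by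
  rw [transpose_submatrix, transpose_one, ← submatrix_mul _ _ _ _ _ Function.bijective_id,
    Matrix.mul_one, submatrix_one _ he]

theorem mul_mulVec_mulVec_of_mul_eq_one [Semiring R] [Fintype κ] [DecidableEq κ]
    {H : Matrix ι κ R} {K : Matrix κ ι R} (hKH : K * H = 1) (y : κ → R) :
    (H * K) *ᵥ (H *ᵥ y) = H *ᵥ y := by
  rw [mulVec_mulVec, Matrix.mul_assoc, hKH, Matrix.mul_one]

theorem sub_mul_mul_mulVec_eq_of_schur_system [CommRing R] [DecidableEq ι] [Fintype κ]
    [DecidableEq κ] {A : Matrix ι ι R} (hA : IsUnit A.det) {H : Matrix ι κ R}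
    {E : Matrix κ κ R} {K : Matrix κ ι R} {b bhat : ι → R} {x₃ : κ → R}
    (hrange : (H * K) *ᵥ (b - bhat) = b - bhat)
    (hx₃ : (E * K * A⁻¹ * H - 1) *ᵥ x₃ = (E * K * A⁻¹) *ᵥ b - K *ᵥ (b - bhat)) :
    (A - H * E * K) *ᵥ (A⁻¹ *ᵥ b - A⁻¹ *ᵥ (H *ᵥ x₃)) = bhat := by
  have hAA : ∀ v, A *ᵥ (A⁻¹ *ᵥ v) = v := fun v => by
    rw [mulVec_mulVec, mul_nonsing_inv A hA, one_mulVec]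
  calc (A - H * E * K) *ᵥ (A⁻¹ *ᵥ b - A⁻¹ *ᵥ (H *ᵥ x₃))
      = b - H *ᵥ ((E * K * A⁻¹) *ᵥ b - (E * K * A⁻¹ * H - 1) *ᵥ x₃) := by
        simp only [sub_mulVec, mulVec_sub, hAA, ← mulVec_mulVec, one_mulVec]
        abel
    _ = b - (H * K) *ᵥ (b - bhat) := by rw [hx₃, sub_sub_cancel, mulVec_mulVec]
    _ = bhat := by rw [hrange, sub_sub_cancel]

end Matrix

theorem stmt_11_general {n m : ℕ} (A : Matrix (Fin n) (Fin n) ℝ) (hA : IsUnit A.det)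
    (idx : Fin m → Fin n) (hidx : Function.Injective idx)
    (H : Matrix (Fin n) (Fin m) ℝ)
    (hH : H = Matrix.of fun i k => if i = idx k then (1 : ℝ) else 0)
    (E : Matrix (Fin m) (Fin m) ℝ)
    (b bhat : Fin n → ℝ) (hb : ∃ y : Fin m → ℝ, bhat - b = H *ᵥ y)
    (x₃ : Fin m → ℝ)
    (hx₃ : (E * Hᵀ * A⁻¹ * H - 1) *ᵥ x₃ = (E * Hᵀ * A⁻¹) *ᵥ b - Hᵀ *ᵥ (b - bhat)) :
    (A - H * E * Hᵀ) *ᵥ (A⁻¹ *ᵥ b - A⁻¹ *ᵥ (H *ᵥ x₃)) = bhat := by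
  obtain ⟨y, hy⟩ := hb
  have hH_submatrix : H = (1 : Matrix (Fin n) (Fin n) ℝ).submatrix id idx := by
    ext i k
    simp [hH, Matrix.one_apply]
  have hHtH : Hᵀ * H = 1 := hH_submatrix ▸ Matrix.transpose_one_submatrix_mul_self hidx
  have hb_range : b - bhat = H *ᵥ (-y) := by
    rw [Matrix.mulVec_neg, ← hy, neg_sub]
  refine Matrix.sub_mul_mul_mulVec_eq_of_schur_system hA ?_ hx₃
  rw [hb_range, Matrix.mul_mulVec_mulVec_of_mul_eq_one hHtH]

/-- correctness of the AMPS direct method: with A nonsingular,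
H a submatrix of the identity, E symmetric, Â = A - H E Hᵀ nonsingular and
b̂ - b in the range of H, if x̂₃ solves
(E Hᵀ A⁻¹ H - I) x̂₃ = E Hᵀ A⁻¹ b - Hᵀ(b - b̂), then
x̂ = A⁻¹ b - A⁻¹ H x̂₃ satisfies Â x̂ = b̂. -/
theorem stmt_11 {n m : ℕ} (A : Matrix (Fin n) (Fin n) ℝ) (hA : IsUnit A.det)
    (idx : Fin m → Fin n) (hidx : Function.Injective idx)
    (H : Matrix (Fin n) (Fin m) ℝ)
    (hH : H = Matrix.of fun i k => if i = idx k then (1 : ℝ) else 0)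
    (E : Matrix (Fin m) (Fin m) ℝ) (hEsym : E.IsSymm)
    (hAhat : IsUnit (A - H * E * Hᵀ).det)
    (b bhat : Fin n → ℝ) (hb : ∃ y : Fin m → ℝ, bhat - b = H *ᵥ y)
    (x₃ : Fin m → ℝ)
    (hx₃ : (E * Hᵀ * A⁻¹ * H - 1) *ᵥ x₃ = (E * Hᵀ * A⁻¹) *ᵥ b - Hᵀ *ᵥ (b - bhat)) :
    (A - H * E * Hᵀ) *ᵥ (A⁻¹ *ᵥ b - A⁻¹ *ᵥ (H *ᵥ x₃)) = bhat :=
  stmt_11_general A hA idx hidx H hH E b bhat hb x₃ hx₃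
end

section
/- Let A be nonsingular symmetric, H an n×m submatrix of the identity, E m×m symmetric. The symmetric 2m×2m matrix S₁ = [[E, I],[I, Hᵀ A⁻¹ H]] is nonsingular if and only if Â = A - H E Hᵀ is nonsingular. -/
open scoped Matrix

/-!
Swapping the two block columns of `[[E, 1], [1, D]]` changes its determinant only by a sign and
produces `[[1, E], [D, 1]]`, whose determinant is `det (1 - D E)` by the Schur complement. With
`D = Hᵀ A⁻¹ H`, the matrix determinant lemma `det (A - U V) = det A · det (1 - V A⁻¹ U)` and
Sylvester's identity `det (1 - X Y) = det (1 - Y X)` give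
`det (A - H E Hᵀ) = det A · det (1 - D E)`.
-/

namespace Matrix

variable {ι κ R : Type*} [Fintype ι] [DecidableEq ι] [Fintype κ] [DecidableEq κ]
  [CommRing R]

theorem isUnit_det_fromBlocks_one₁₂_one₂₁_iff (E D : Matrix ι ι R) :
    IsUnit (fromBlocks E 1 1 D).det ↔ IsUnit (1 - D * E).det := by
  have h := det_permute' (Equiv.sumComm ι ι) (fromBlocks E 1 1 D)
  rw [Equiv.sumComm_apply, fromBlocks_submatrix_sum_swap_right, submatrix_id_id,
    det_fromBlocks_one₁₁] at h
  have hsign : IsUnit ((Equiv.Perm.sign (Equiv.sumComm ι ι) : ℤ) : R) :=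
    (Equiv.Perm.sign _).isUnit.map (Int.castRingHom R)
  rw [h, IsUnit.mul_iff, and_iff_right hsign]

theorem isUnit_det_sub_mul_iff {A : Matrix ι ι R} (hA : IsUnit A.det) (U : Matrix ι κ R)
    (V : Matrix κ ι R) :
    IsUnit (A - U * V).det ↔ IsUnit (1 - V * A⁻¹ * U).det := by
  rw [sub_eq_add_neg, ← Matrix.neg_mul, det_add_mul _ _ hA, Matrix.mul_neg, ← sub_eq_add_neg,
    IsUnit.mul_iff, and_iff_right hA]

end Matrix

theorem stmt_12_general {n m : ℕ} (A : Matrix (Fin n) (Fin n) ℝ)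
    (hA : IsUnit A.det)
    (H : Matrix (Fin n) (Fin m) ℝ)
    (E : Matrix (Fin m) (Fin m) ℝ) :
    IsUnit (Matrix.fromBlocks E 1 1 (Hᵀ * A⁻¹ * H)).det ↔
      IsUnit (A - H * E * Hᵀ).det := by
  rw [Matrix.isUnit_det_fromBlocks_one₁₂_one₂₁_iff, Matrix.mul_assoc H,
    Matrix.isUnit_det_sub_mul_iff hA, Matrix.det_one_sub_mul_comm]
  simp only [Matrix.mul_assoc]

/-- With A symmetric nonsingular, H a submatrix of the identity
with distinct columns and E symmetric, S₁ = [[E, I],[I, Hᵀ A⁻¹ H]] is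
nonsingular iff Â = A - H E Hᵀ is nonsingular. -/
theorem stmt_12 {n m : ℕ} (A : Matrix (Fin n) (Fin n) ℝ)
    (hAsym : A.IsSymm) (hA : IsUnit A.det)
    (idx : Fin m → Fin n) (hidx : Function.Injective idx)
    (H : Matrix (Fin n) (Fin m) ℝ)
    (hH : H = Matrix.of fun i k => if i = idx k then (1 : ℝ) else 0)
    (E : Matrix (Fin m) (Fin m) ℝ) (hEsym : E.IsSymm) :
    IsUnit (Matrix.fromBlocks E 1 1 (Hᵀ * A⁻¹ * H)).det ↔
      IsUnit (A - H * E * Hᵀ).det :=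
  stmt_12_general A hA H E
end

section
/- Block elimination of A in the augmented matrix: with L̂ = [[L, 0, 0],[HᵀL, I, 0],[HᵀL⁻ᵀD⁻¹, 0, I]] and D̂ = [[D, 0],[0, -S₁]], one has [[A, AH, H],[HᵀA, C, 0],[Hᵀ, 0, 0]] = L̂ D̂ L̂ᵀ, where A = L D Lᵀ, C = HᵀAH - E, and S₁ = [[E, I],[I, HᵀA⁻¹H]]. -/
/-!
Write `L̂ = [[L, 0], [B, 1]]` with `B = [HᵀL; HᵀK]` and `K = L⁻ᵀD⁻¹`. Then
`L̂ D̂ L̂ᵀ = [[LDLᵀ, LDBᵀ], [BDLᵀ, BDBᵀ - S₁]]`, and for symmetric `D` the factor `K` satisfies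
`KDLᵀ = 1`, `LDKᵀ = 1` and `KDKᵀ = (LDLᵀ)⁻¹ = A⁻¹`. Hence `BDBᵀ = [[HᵀAH, HᵀH], [HᵀH, HᵀA⁻¹H]]`,
and since `HᵀH = 1` for a column selection with distinct columns, subtracting `S₁` leaves
`[[C, 0], [0, 0]]`.
-/

open scoped Matrix

namespace Matrix

theorem transpose_mul_self_of_injective {ι κ R : Type*} [Fintype ι] [DecidableEq ι]
    [DecidableEq κ] [NonAssocSemiring R] {idx : κ → ι} (hidx : Function.Injective idx) :
    (of fun i k => if i = idx k then (1 : R) else 0)ᵀ *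
      of (fun i k => if i = idx k then (1 : R) else 0) = 1 := by
  ext k l
  simp [mul_apply, hidx.eq_iff, one_apply, eq_comm]

section Blocks

variable {l m n p k R : Type*} [Fintype n] [CommRing R]

theorem fromBlocks_mul_fromBlocks_mul_transpose [Fintype m] [DecidableEq m]
    (L D : Matrix n n R) (B : Matrix m n R) (S : Matrix m m R) :
    fromBlocks L 0 B 1 * fromBlocks D 0 0 S * (fromBlocks L 0 B 1)ᵀ =
      fromBlocks (L * D * Lᵀ) (L * D * Bᵀ) (B * D * Lᵀ) (B * D * Bᵀ + S) := by
  simp [fromBlocks_transpose, fromBlocks_multiply]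

theorem fromRows_mul_mul_transpose_fromRows (P : Matrix m n R) (Q : Matrix p n R)
    (D : Matrix n n R) :
    fromRows P Q * D * (fromRows P Q)ᵀ =
      fromBlocks (P * D * Pᵀ) (P * D * Qᵀ) (Q * D * Pᵀ) (Q * D * Qᵀ) := by
  simp [fromRows_mul, transpose_fromRows, mul_fromCols, fromCols_fromRows_eq_fromBlocks]

theorem mul_mul_transpose_fromRows (X : Matrix m n R) (P : Matrix p n R) (Q : Matrix p n R)
    (D : Matrix n n R) : X * D * (fromRows P Q)ᵀ = fromCols (X * D * Pᵀ) (X * D * Qᵀ) := by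
  simp [transpose_fromRows, mul_fromCols]

theorem mul_mul_transpose_mul [Fintype k] (X : Matrix l n R) (D : Matrix n n R)
    (P : Matrix p k R) (Y : Matrix k n R) : X * D * (P * Y)ᵀ = X * D * Yᵀ * Pᵀ := by
  rw [transpose_mul, Matrix.mul_assoc _ Yᵀ]

end Blocks

section LDL

variable {n R : Type*} [Fintype n] [DecidableEq n] [CommRing R] {L D : Matrix n n R}

theorem inv_transpose_mul_inv_mul_mul_transpose (hL : IsUnit L.det) (hD : IsUnit D.det) :
    Lᵀ⁻¹ * D⁻¹ * D * Lᵀ = 1 := by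
  rw [Matrix.mul_assoc (Lᵀ⁻¹), nonsing_inv_mul _ hD, Matrix.mul_one,
    nonsing_inv_mul _ (by rwa [det_transpose])]

theorem mul_mul_transpose_inv_transpose_mul_inv (hL : IsUnit L.det) (hD : IsUnit D.det)
    (hDsym : D.IsSymm) : L * D * (Lᵀ⁻¹ * D⁻¹)ᵀ = 1 := by
  simpa [Matrix.mul_assoc, hDsym.eq] using
    congrArg transpose (inv_transpose_mul_inv_mul_mul_transpose hL hD)

theorem inv_transpose_mul_inv_mul_mul_transpose_self (hD : IsUnit D.det) (hDsym : D.IsSymm) :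
    Lᵀ⁻¹ * D⁻¹ * D * (Lᵀ⁻¹ * D⁻¹)ᵀ = (L * D * Lᵀ)⁻¹ := by
  rw [mul_inv_rev, mul_inv_rev, transpose_mul, transpose_nonsing_inv, transpose_nonsing_inv,
    transpose_transpose, hDsym.eq, Matrix.mul_assoc (Lᵀ⁻¹), nonsing_inv_mul _ hD, Matrix.mul_one]

end LDL

end Matrix

open Matrix

theorem stmt_13_general {n m : ℕ} (A L D : Matrix (Fin n) (Fin n) ℝ)
    (hL : IsUnit L.det) (hD : IsUnit D.det) (hDsym : D.IsSymm)
    (hLDL : A = L * D * Lᵀ)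
    (idx : Fin m → Fin n) (hidx : Function.Injective idx)
    (H : Matrix (Fin n) (Fin m) ℝ)
    (hH : H = Matrix.of fun i k => if i = idx k then (1 : ℝ) else 0)
    (E : Matrix (Fin m) (Fin m) ℝ)
    (C : Matrix (Fin m) (Fin m) ℝ) (hC : C = Hᵀ * A * H - E)
    (Lhat : Matrix (Fin n ⊕ (Fin m ⊕ Fin m)) (Fin n ⊕ (Fin m ⊕ Fin m)) ℝ)
    (hLhat : Lhat = Matrix.fromBlocks L 0
      (Matrix.fromRows (Hᵀ * L) (Hᵀ * (Lᵀ)⁻¹ * D⁻¹)) 1)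
    (S₁ : Matrix (Fin m ⊕ Fin m) (Fin m ⊕ Fin m) ℝ)
    (hS₁ : S₁ = Matrix.fromBlocks E 1 1 (Hᵀ * A⁻¹ * H))
    (Dhat : Matrix (Fin n ⊕ (Fin m ⊕ Fin m)) (Fin n ⊕ (Fin m ⊕ Fin m)) ℝ)
    (hDhat : Dhat = Matrix.fromBlocks D 0 0 (-S₁)) :
    Matrix.fromBlocks A (Matrix.fromCols (A * H) H)
        (Matrix.fromRows (Hᵀ * A) Hᵀ) (Matrix.fromBlocks C 0 0 0) =
      Lhat * Dhat * Lhatᵀ := by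
  have hHH : Hᵀ * H = 1 := hH ▸ transpose_mul_self_of_injective hidx
  have hKL := inv_transpose_mul_inv_mul_mul_transpose hL hD
  have hLK := mul_mul_transpose_inv_transpose_mul_inv hL hD hDsym
  have hKK := inv_transpose_mul_inv_mul_mul_transpose_self (L := L) hD hDsym
  subst hLhat hDhat hS₁ hC hLDL
  rw [fromBlocks_mul_fromBlocks_mul_transpose, Matrix.mul_assoc Hᵀ (Lᵀ⁻¹),
    fromRows_mul_mul_transpose_fromRows, mul_mul_transpose_fromRows]
  simp only [fromRows_mul, mul_mul_transpose_mul, Matrix.mul_assoc Hᵀ, transpose_transpose,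
    hKL, hLK, hKK, hHH, Matrix.one_mul, Matrix.mul_one, fromBlocks_neg, fromBlocks_add,
    add_neg_cancel, sub_eq_add_neg]

/-- Block elimination of A in the augmented matrix: with
L̂ = [[L,0,0],[HᵀL,I,0],[HᵀL⁻ᵀD⁻¹,0,I]] and D̂ = [[D,0],[0,-S₁]] one has
[[A, AH, H],[HᵀA, C, 0],[Hᵀ, 0, 0]] = L̂ D̂ L̂ᵀ, where A = L D Lᵀ,
C = HᵀAH - E and S₁ = [[E, I],[I, HᵀA⁻¹H]]. -/
theorem stmt_13 {n m : ℕ} (A L D : Matrix (Fin n) (Fin n) ℝ)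
    (hAsym : A.IsSymm) (hA : IsUnit A.det)
    (hL : IsUnit L.det) (hD : IsUnit D.det) (hDsym : D.IsSymm)
    (hLDL : A = L * D * Lᵀ)
    (idx : Fin m → Fin n) (hidx : Function.Injective idx)
    (H : Matrix (Fin n) (Fin m) ℝ)
    (hH : H = Matrix.of fun i k => if i = idx k then (1 : ℝ) else 0)
    (E : Matrix (Fin m) (Fin m) ℝ) (hEsym : E.IsSymm)
    (C : Matrix (Fin m) (Fin m) ℝ) (hC : C = Hᵀ * A * H - E)
    (Lhat : Matrix (Fin n ⊕ (Fin m ⊕ Fin m)) (Fin n ⊕ (Fin m ⊕ Fin m)) ℝ)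
    (hLhat : Lhat = Matrix.fromBlocks L 0
      (Matrix.fromRows (Hᵀ * L) (Hᵀ * (Lᵀ)⁻¹ * D⁻¹)) 1)
    (S₁ : Matrix (Fin m ⊕ Fin m) (Fin m ⊕ Fin m) ℝ)
    (hS₁ : S₁ = Matrix.fromBlocks E 1 1 (Hᵀ * A⁻¹ * H))
    (Dhat : Matrix (Fin n ⊕ (Fin m ⊕ Fin m)) (Fin n ⊕ (Fin m ⊕ Fin m)) ℝ)
    (hDhat : Dhat = Matrix.fromBlocks D 0 0 (-S₁)) :
    Matrix.fromBlocks A (Matrix.fromCols (A * H) H)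
        (Matrix.fromRows (Hᵀ * A) Hᵀ) (Matrix.fromBlocks C 0 0 0) =
      Lhat * Dhat * Lhatᵀ :=
  stmt_13_general A L D hL hD hDsym hLDL idx hidx H hH E C hC Lhat hLhat S₁ hS₁ Dhat hDhat
end

section
/- Let L be an invertible lower triangular n×n matrix and b an n-vector. Then the support of x = L⁻¹ b is contained in the closure of the support of b with respect to the directed graph G(L), i.e., the set of vertices from which there is a directed path in G(L) to a vertex in supp(b). -/
open scoped Matrix

/-- The directed graph of a matrix: edge from i to j when i ≠ j and M i j ≠ 0. -/
def matEdge {n : ℕ} (M : Matrix (Fin n) (Fin n) ℝ) (i j : Fin n) : Prop :=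
  i ≠ j ∧ M i j ≠ 0

/-- The closure of a vertex set V with respect to M: the vertices from which
there is a directed path in G(M) to a vertex of V. -/
def matClosure {n : ℕ} (M : Matrix (Fin n) (Fin n) ℝ) (V : Set (Fin n)) : Set (Fin n) :=
  {i | ∃ j ∈ V, Relation.ReflTransGen (matEdge M) i j}

/-!
Write `b = L x`. If `x i ≠ 0` but `b i = 0`, the diagonal term `L i i * x i` of row `i` must be
cancelled by some `L i j * x j ≠ 0` with `j ≠ i`; triangularity forces `j < i`, and `(i, j)` is an
edge of `G(L)`. Strong induction on `i` then puts every vertex of `supp x` on a path to `supp b`.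
-/

namespace Matrix

theorem exists_ne_mul_ne_zero_of_mulVec_eq_zero {ι R : Type*} [Fintype ι] [DecidableEq ι]
    [NonUnitalNonAssocSemiring R] {L : Matrix ι ι R} {x : ι → R} {i : ι}
    (hdiag : L i i * x i ≠ 0) (hb : (L *ᵥ x) i = 0) : ∃ j ≠ i, L i j * x j ≠ 0 := by
  by_contra! hoff
  have hrow : (L *ᵥ x) i = L i i * x i :=
    Finset.sum_eq_single i (fun j _ hj => hoff j hj) (by simp)
  exact hdiag (hrow ▸ hb)

theorem IsLowerTriangular.diag_ne_zero {ι K : Type*} [Fintype ι] [LinearOrder ι] [CommRing K]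
    [Nontrivial K] {L : Matrix ι ι K} (hL : L.IsLowerTriangular) (hdet : IsUnit L.det) (i : ι) :
    L i i ≠ 0 := by
  rw [det_of_isLowerTriangular L hL] at hdet
  exact (isUnit_of_dvd_unit (Finset.dvd_prod_of_mem _ (Finset.mem_univ i)) hdet).ne_zero

end Matrix

theorem matClosure_of_matEdge {n : ℕ} {M : Matrix (Fin n) (Fin n) ℝ} {V : Set (Fin n)}
    {i j : Fin n} (hij : matEdge M i j) (hj : j ∈ matClosure M V) : i ∈ matClosure M V :=
  let ⟨k, hk, hjk⟩ := hj
  ⟨k, hk, .head hij hjk⟩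

theorem support_subset_matClosure_support_mulVec {n : ℕ} {L : Matrix (Fin n) (Fin n) ℝ}
    (hL : L.IsLowerTriangular) (hdiag : ∀ i, L i i ≠ 0) (x : Fin n → ℝ) :
    {i | x i ≠ 0} ⊆ matClosure L {j | (L *ᵥ x) j ≠ 0} := by
  intro i
  induction i using WellFoundedLT.induction with
  | _ i ih =>
  intro hxi
  by_cases hbi : (L *ᵥ x) i ≠ 0
  · exact ⟨i, hbi, .refl⟩
  obtain ⟨j, hji, hLx⟩ := Matrix.exists_ne_mul_ne_zero_of_mulVec_eq_zero
    (mul_ne_zero (hdiag i) hxi) (not_not.mp hbi)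
  have hLij : L i j ≠ 0 := left_ne_zero_of_mul hLx
  have hlt : j < i := hji.lt_of_le (not_lt.mp fun hij => hLij (hL hij))
  exact matClosure_of_matEdge ⟨hji.symm, hLij⟩ (ih j hlt (right_ne_zero_of_mul hLx))

/-- For an invertible lower triangular L, the support of
x = L⁻¹ b is contained in the closure of the support of b with respect to
G(L). -/
theorem stmt_14 {n : ℕ} (L : Matrix (Fin n) (Fin n) ℝ)
    (hLtri : ∀ i j : Fin n, i < j → L i j = 0) (hL : IsUnit L.det)
    (b : Fin n → ℝ) :
    {i | (L⁻¹ *ᵥ b) i ≠ 0} ⊆ matClosure L {j | b j ≠ 0} := by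
  have hlower : L.IsLowerTriangular := fun i j => hLtri i j
  have hsolve : L *ᵥ (L⁻¹ *ᵥ b) = b := by
    rw [Matrix.mulVec_mulVec, Matrix.mul_nonsing_inv L hL, Matrix.one_mulVec]
  simpa only [hsolve] using
    support_subset_matClosure_support_mulVec hlower (hlower.diag_ne_zero hL) (L⁻¹ *ᵥ b)
end

section
/- Consider the augmented system [[A₁₁, A₁₂, J₁, I],[A₁₂ᵀ, A₂₂, J₂, 0],[J₁ᵀ, J₂ᵀ, C, 0],[I, 0, 0, 0]] [x̂₁₁; x̂₁₂; x̂₂; x̂₃] = [b₁; b₂; Hᵀb̂; 0]. Any solution satisfies x̂₁₁ = 0, and the pair (x̂₁₂, x̂₂) solves the system [[C, J₂ᵀ],[J₂, A₂₂]] [x̂₂; x̂₁₂] = [Hᵀb̂; b₂], independently of the choice of J₁; moreover x̂₃ = b₁ - A₁₂ x̂₁₂ - J₁ x̂₂ is uniquely determined given (x̂₁₂, x̂₂). -/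
open scoped Matrix

/-! The last block row of the augmented system reads `x̂₁₁ = 0`. Substituting this into the
second and third block rows leaves exactly the reduced system in `(x̂₂, x̂₁₂)`, in which `J₁`
no longer occurs, and the first block row, whose `x̂₃`-coefficient is the identity, solves for
`x̂₃`. -/

namespace Matrix

variable {l m n o R : Type*} [Fintype l] [Fintype m] [NonUnitalNonAssocSemiring R]

theorem fromBlocks_mulVec_sumElim (A : Matrix n l R) (B : Matrix n m R) (C : Matrix o l R)
    (D : Matrix o m R) (x : l → R) (y : m → R) :
    fromBlocks A B C D *ᵥ Sum.elim x y = Sum.elim (A *ᵥ x + B *ᵥ y) (C *ᵥ x + D *ᵥ y) :=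
  fromBlocks_mulVec A B C D _

theorem fromBlocks_mulVec_sumElim_eq_iff (A : Matrix n l R) (B : Matrix n m R)
    (C : Matrix o l R) (D : Matrix o m R) (x : l → R) (y : m → R) (u : n → R) (v : o → R) :
    fromBlocks A B C D *ᵥ Sum.elim x y = Sum.elim u v ↔
      A *ᵥ x + B *ᵥ y = u ∧ C *ᵥ x + D *ᵥ y = v := by
  rw [fromBlocks_mulVec_sumElim, Sum.elim_eq_iff]

end Matrix

theorem stmt_18_general {m p : ℕ} (A₁₁ : Matrix (Fin m) (Fin m) ℝ)
    (A₁₂ : Matrix (Fin m) (Fin p) ℝ) (A₂₂ : Matrix (Fin p) (Fin p) ℝ)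
    (C : Matrix (Fin m) (Fin m) ℝ)
    (J₁ : Matrix (Fin m) (Fin m) ℝ) (J₂ : Matrix (Fin p) (Fin m) ℝ)
    (b₁ : Fin m → ℝ) (b₂ : Fin p → ℝ) (hb : Fin m → ℝ)
    (x₁₁ : Fin m → ℝ) (x₁₂ : Fin p → ℝ) (x₂ x₃ : Fin m → ℝ)
    (hsol : (Matrix.fromBlocks (Matrix.fromBlocks A₁₁ A₁₂ A₁₂ᵀ A₂₂)
        (Matrix.fromBlocks J₁ (1 : Matrix (Fin m) (Fin m) ℝ) J₂ (0 : Matrix (Fin p) (Fin m) ℝ))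
        (Matrix.fromBlocks J₁ᵀ J₂ᵀ (1 : Matrix (Fin m) (Fin m) ℝ) (0 : Matrix (Fin m) (Fin p) ℝ))
        (Matrix.fromBlocks C 0 0 0)) *ᵥ
        Sum.elim (Sum.elim x₁₁ x₁₂) (Sum.elim x₂ x₃) =
        Sum.elim (Sum.elim b₁ b₂) (Sum.elim hb 0)) :
    x₁₁ = 0 ∧
      (Matrix.fromBlocks C J₂ᵀ J₂ A₂₂) *ᵥ Sum.elim x₂ x₁₂ = Sum.elim hb b₂ ∧
      x₃ = b₁ - A₁₂ *ᵥ x₁₂ - J₁ *ᵥ x₂ := by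
  simp only [Matrix.fromBlocks_mulVec_sumElim, ← Sum.elim_add_add, Sum.elim_eq_iff] at hsol
  obtain ⟨⟨row₁, row₂⟩, row₃, row₄⟩ := hsol
  have hx₁₁ : x₁₁ = 0 := by simpa using row₄
  subst hx₁₁
  simp only [Matrix.mulVec_zero, Matrix.zero_mulVec, Matrix.one_mulVec, zero_add,
    add_zero] at row₁ row₂ row₃
  refine ⟨rfl, (Matrix.fromBlocks_mulVec_sumElim_eq_iff ..).2 ⟨?_, ?_⟩, ?_⟩
  · rw [← row₃, add_comm]
  · rw [← row₂, add_comm]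
  · rw [← row₁]
    abel

/-- Lemma 2.1: Any solution of the augmented system
[[A₁₁, A₁₂, J₁, I],[A₁₂ᵀ, A₂₂, J₂, 0],[J₁ᵀ, J₂ᵀ, C, 0],[I, 0, 0, 0]]
[x̂₁₁; x̂₁₂; x̂₂; x̂₃] = [b₁; b₂; Hᵀb̂; 0] satisfies x̂₁₁ = 0, the pair
(x̂₁₂, x̂₂) solves [[C, J₂ᵀ],[J₂, A₂₂]] [x̂₂; x̂₁₂] = [Hᵀb̂; b₂] (a system not
involving J₁), and x̂₃ = b₁ - A₁₂ x̂₁₂ - J₁ x̂₂. -/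
theorem stmt_18 {m p : ℕ} (A₁₁ : Matrix (Fin m) (Fin m) ℝ)
    (A₁₂ : Matrix (Fin m) (Fin p) ℝ) (A₂₂ : Matrix (Fin p) (Fin p) ℝ)
    (C : Matrix (Fin m) (Fin m) ℝ) (hCsym : C.IsSymm)
    (J₁ : Matrix (Fin m) (Fin m) ℝ) (J₂ : Matrix (Fin p) (Fin m) ℝ)
    (hinv : IsUnit (Matrix.fromBlocks C J₂ᵀ J₂ A₂₂).det)
    (b₁ : Fin m → ℝ) (b₂ : Fin p → ℝ) (hb : Fin m → ℝ)
    (x₁₁ : Fin m → ℝ) (x₁₂ : Fin p → ℝ) (x₂ x₃ : Fin m → ℝ)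
    (hsol : (Matrix.fromBlocks (Matrix.fromBlocks A₁₁ A₁₂ A₁₂ᵀ A₂₂)
        (Matrix.fromBlocks J₁ (1 : Matrix (Fin m) (Fin m) ℝ) J₂ (0 : Matrix (Fin p) (Fin m) ℝ))
        (Matrix.fromBlocks J₁ᵀ J₂ᵀ (1 : Matrix (Fin m) (Fin m) ℝ) (0 : Matrix (Fin m) (Fin p) ℝ))
        (Matrix.fromBlocks C 0 0 0)) *ᵥ
        Sum.elim (Sum.elim x₁₁ x₁₂) (Sum.elim x₂ x₃) =
        Sum.elim (Sum.elim b₁ b₂) (Sum.elim hb 0)) :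
    x₁₁ = 0 ∧
      (Matrix.fromBlocks C J₂ᵀ J₂ A₂₂) *ᵥ Sum.elim x₂ x₁₂ = Sum.elim hb b₂ ∧
      x₃ = b₁ - A₁₂ *ᵥ x₁₂ - J₁ *ᵥ x₂ :=
  stmt_18_general A₁₁ A₁₂ A₂₂ C J₁ J₂ b₁ b₂ hb x₁₁ x₁₂ x₂ x₃ hsol
end
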